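/- Let (s_α)_{α>0} be a family of proper, convex, lower semicontinuous functions s_α : ℝ → [0,∞] with s_α(0) = 0, and suppose that for every y ∈ ℝ one has prox_{s_α}(y) → y as α → 0. Then for every y ∈ ℝ, s_α(y) → 0 as α → 0. -/

import Mathlib

/-!
Write `p` for the proximal point of `s` at `2y`. Comparing the prox objective at `p` with its
value at `(1 - t) p` and using convexity together with `s 0 = 0` gives, as `t → 0`, the
subgradient inequality `s p ≤ p (2y - p)`. Convexity and `s 0 = 0` also make `s` nondecreasing
along rays from the origin, and once `p` is close to `2y` the point `y` lies between `0` and `p`.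
Hence `s y ≤ s p ≤ p (2y - p) → 2y · 0 = 0`.
-/

open scoped ENNReal
open Filter

noncomputable section

/-- `p` is the (unique) proximal point at `x` of the `[0,∞]`-valued functional `s`. -/
def IsProxPtE (s : ℝ → ℝ≥0∞) (x p : ℝ) : Prop :=
  (∀ y : ℝ, ENNReal.ofReal ((x - p) ^ 2 / 2) + s p ≤ ENNReal.ofReal ((x - y) ^ 2 / 2) + s y) ∧
  ∀ q : ℝ, (∀ y : ℝ, ENNReal.ofReal ((x - q) ^ 2 / 2) + s q ≤
    ENNReal.ofReal ((x - y) ^ 2 / 2) + s y) → q = p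

/-- Convexity for `[0,∞]`-valued functions on `ℝ`. -/
def ENNConvexOn (s : ℝ → ℝ≥0∞) : Prop :=
  ∀ x y : ℝ, ∀ a b : ℝ, 0 ≤ a → 0 ≤ b → a + b = 1 →
    s (a * x + b * y) ≤ ENNReal.ofReal a * s x + ENNReal.ofReal b * s y

open scoped Topology
open Set

namespace ENNConvexOn

variable {s : ℝ → ℝ≥0∞}

lemma apply_mul_le (hconv : ENNConvexOn s) (hs0 : s 0 = 0) {c : ℝ} (hc0 : 0 ≤ c) (hc1 : c ≤ 1)
    (z : ℝ) : s (c * z) ≤ ENNReal.ofReal c * s z := by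
  simpa [hs0] using hconv z 0 c (1 - c) hc0 (by linarith) (by ring)

lemma apply_le_of_mem_uIcc (hconv : ENNConvexOn s) (hs0 : s 0 = 0) {y z : ℝ}
    (hy : y ∈ uIcc 0 z) : s y ≤ s z := by
  rw [← segment_eq_uIcc] at hy
  obtain ⟨a, c, ha, hc, hac, rfl⟩ := hy
  calc s (a • 0 + c • z) = s (c * z) := by simp
    _ ≤ ENNReal.ofReal c * s z := hconv.apply_mul_le hs0 hc (by linarith) z
    _ ≤ s z := mul_le_of_le_one_left' (ENNReal.ofReal_le_one.mpr (by linarith))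

/-- The subgradient inequality at a proximal point: `x - p ∈ ∂s(p)`, tested against `0`. -/
lemma apply_le_mul_sub_of_forall_le (hconv : ENNConvexOn s) (hs0 : s 0 = 0) {x p : ℝ}
    (hmin : ∀ y, ENNReal.ofReal ((x - p) ^ 2 / 2) + s p ≤
      ENNReal.ofReal ((x - y) ^ 2 / 2) + s y) :
    s p ≤ ENNReal.ofReal (p * (x - p)) := by
  have hfin : s p ≠ ⊤ := by
    refine ne_top_of_le_ne_top (ENNReal.ofReal_ne_top (r := x ^ 2 / 2)) ?_
    simpa [hs0] using le_add_self.trans (hmin 0)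
  set S := (s p).toReal
  have hS : s p = ENNReal.ofReal S := (ENNReal.ofReal_toReal hfin).symm
  have hstep : ∀ t ∈ Ioo (0 : ℝ) 1, S ≤ p * (x - p) + t * p ^ 2 / 2 := by
    rintro t ⟨ht0, ht1⟩
    have h := (hmin ((1 - t) * p)).trans
      (add_le_add le_rfl (hconv.apply_mul_le hs0 (c := 1 - t) (by linarith) (by linarith) p))
    rw [hS, ← ENNReal.ofReal_mul (by linarith), ← ENNReal.ofReal_add (by positivity)
      ENNReal.toReal_nonneg, ← ENNReal.ofReal_add (by positivity)
      (mul_nonneg (by linarith) ENNReal.toReal_nonneg),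
      ENNReal.ofReal_le_ofReal_iff (by positivity)] at h
    nlinarith
  have hlim : Tendsto (fun t : ℝ => p * (x - p) + t * p ^ 2 / 2) (𝓝[>] 0)
      (𝓝 (p * (x - p))) := by
    have hcont : Continuous (fun t : ℝ => p * (x - p) + t * p ^ 2 / 2) := by fun_prop
    simpa using (hcont.tendsto 0).mono_left nhdsWithin_le_nhds
  rw [hS]
  exact ENNReal.ofReal_le_ofReal <| ge_of_tendsto hlim <|
    mem_of_superset (Ioo_mem_nhdsGT one_pos) hstep

end ENNConvexOn

lemma eventually_mem_uIcc_zero_of_tendsto_two_mul {ι : Type*} {l : Filter ι} {f : ι → ℝ}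
    {y : ℝ} (hf : Tendsto f l (𝓝 (2 * y))) : ∀ᶠ i in l, y ∈ uIcc 0 (f i) := by
  rcases lt_trichotomy y 0 with hy | rfl | hy
  · filter_upwards [hf.eventually_lt_const (by linarith : 2 * y < y)] with i hi
    exact mem_uIcc.mpr (Or.inr ⟨hi.le, hy.le⟩)
  · exact Eventually.of_forall fun _ => left_mem_uIcc
  · filter_upwards [hf.eventually_const_lt (by linarith : y < 2 * y)] with i hi
    exact mem_uIcc.mpr (Or.inl ⟨hy.le, hi.le⟩)

theorem statement14 (s : ℝ → ℝ → ℝ≥0∞)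
    (hconv : ∀ α > (0 : ℝ), ENNConvexOn (s α))
    (hs0 : ∀ α > (0 : ℝ), s α 0 = 0)
    (p : ℝ → ℝ → ℝ) (hp : ∀ α > (0 : ℝ), ∀ y : ℝ, IsProxPtE (s α) y (p α y))
    (hpconv : ∀ y : ℝ, Tendsto (fun α => p α y) (nhdsWithin 0 (Set.Ioi 0)) (nhds y)) :
    ∀ y : ℝ, Tendsto (fun α => s α y) (nhdsWithin 0 (Set.Ioi 0)) (nhds 0) := by
  intro y
  have hbound : ∀ᶠ α in 𝓝[>] 0,
      s α y ≤ ENNReal.ofReal (p α (2 * y) * (2 * y - p α (2 * y))) := by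
    filter_upwards [self_mem_nhdsWithin, eventually_mem_uIcc_zero_of_tendsto_two_mul (hpconv _)]
      with α hα hy
    exact ((hconv α hα).apply_le_of_mem_uIcc (hs0 α hα) hy).trans
      ((hconv α hα).apply_le_mul_sub_of_forall_le (hs0 α hα) (hp α hα _).1)
  have hlim : Tendsto (fun α => ENNReal.ofReal (p α (2 * y) * (2 * y - p α (2 * y))))
      (𝓝[>] 0) (𝓝 0) := by
    simpa using ENNReal.tendsto_ofReal ((hpconv (2 * y)).mul ((hpconv (2 * y)).const_sub (2 * y)))
  exact tendsto_of_tendsto_of_tendsto_of_le_of_le' tendsto_const_nhds hlim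
    (Eventually.of_forall fun _ => zero_le) hbound
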